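/- arXiv:1610.06516 — 5 statements merged into one kernel-verified Lean document; each statement's English description precedes it below -/
import Mathlib

section
/- Let L be a Lie algebra over a field. The set Δ(L) = {x ∈ L : the image of the map ad x : L → L is finite-dimensional} is a Lie ideal of L. -/
/-!
Endomorphisms of finite rank form a two-sided ideal of `Module.End F L`, hence a Lie ideal for
the commutator bracket, and `Δ(L)` is its preimage under the Lie algebra homomorphism `ad`.
The ideal is built from `HasNoetherianRange`, which is closed under sums over any ring and
agrees with finite generation of the range over a Noetherian ring.
-/

open LinearMap

attribute [local instance] LieRing.ofAssociativeRing

namespace LinearMap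

variable {R M : Type*} [CommRing R] [AddCommGroup M] [Module R M]

theorem hasNoetherianRange_iff_finite_range [IsNoetherianRing R] {N : Type*} [AddCommGroup N]
    [Module R N] {f : M →ₗ[R] N} : f.HasNoetherianRange ↔ Module.Finite R (range f) := by
  rw [hasNoetherianRange_iff_hasFiniteRange, hasFiniteRange_iff_range, Module.Finite.iff_fg]

theorem HasNoetherianRange.lie {f : Module.End R M} (hf : f.HasNoetherianRange)
    (g : Module.End R M) : (⁅g, f⁆ : Module.End R M).HasNoetherianRange := by
  rw [Ring.lie_def]
  exact (hf.comp_left g).sub (hf.comp_right g)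

variable (R M) in
def finiteRangeLieIdeal : LieIdeal R (Module.End R M) where
  toSubmodule := finiteRange R M M
  lie_mem hf := hf.lie _

end LinearMap

namespace LieAlgebra

variable (R L : Type*) [CommRing R] [LieRing L] [LieAlgebra R L]

def adFiniteRangeIdeal : LieIdeal R L :=
  (finiteRangeLieIdeal R L).comap (ad R L)

variable {R L} in
theorem mem_adFiniteRangeIdeal_iff [IsNoetherianRing R] {x : L} :
    x ∈ adFiniteRangeIdeal R L ↔ Module.Finite R (range (ad R L x)) :=
  hasNoetherianRange_iff_finite_range

end LieAlgebra

/-- For a Lie algebra `L` over a field `F`, the set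
`Δ(L) = {x ∈ L | dim [L, x] < ∞}` (where `[L, x]` is the image of `ad x`)
is a Lie ideal of `L`. -/
theorem delta_is_lie_ideal
    (F : Type*) (L : Type*) [Field F] [LieRing L] [LieAlgebra F L] :
    ∃ I : LieIdeal F L,
      (I : Set L) = {x : L | Module.Finite F (LinearMap.range (LieAlgebra.ad F L x))} :=
  ⟨LieAlgebra.adFiniteRangeIdeal F L, Set.ext fun _ => LieAlgebra.mem_adFiniteRangeIdeal_iff⟩
end

section
/- Let L be a restricted Lie algebra over a field of characteristic p > 0. The sum of any two p-nil restricted ideals of L is again a p-nil restricted ideal. Consequently, the sum O_p(L) of all p-nil restricted ideals of L is itself a p-nil restricted ideal. -/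
/-- A restricted Lie algebra over a field `F` of characteristic `p`: a Lie algebra
equipped with a `p`-mapping `x ↦ x^[p]` satisfying `(a • x)^[p] = aᵖ • x^[p]`,
`ad (x^[p]) = (ad x)ᵖ`, and a Jacobson-type formula: `(x+y)^[p] - x^[p] - y^[p]` is a
sum of Lie commutators of elements of the Lie subalgebra generated by `x` and `y`. -/
class RestrictedLie (p : ℕ) (F : Type*) (L : Type*) [Field F] [LieRing L]
    [LieAlgebra F L] : Type _ where
  pmap : L → L
  pmap_smul : ∀ (a : F) (x : L), pmap (a • x) = a ^ p • pmap x
  ad_pmap : ∀ x y : L, ⁅pmap x, y⁆ = ((LieAlgebra.ad F L x) ^ p) y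
  pmap_add_sub_mem : ∀ x y : L,
    pmap (x + y) - pmap x - pmap y ∈ Submodule.span F
      {z : L | ∃ u ∈ LieSubalgebra.lieSpan F L {x, y},
        ∃ v ∈ LieSubalgebra.lieSpan F L {x, y}, z = ⁅u, v⁆}

namespace RestrictedLie

variable (p : ℕ) (F : Type*) {L : Type*} [Field F] [LieRing L] [LieAlgebra F L]
  [RestrictedLie p F L]

/-- An element `x` is `p`-nilpotent if some iterate of the `p`-mapping kills it. -/
def IsPNilpotent (x : L) : Prop :=
  ∃ n : ℕ, (pmap (p := p) (F := F))^[n] x = 0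

/-- A subset is `p`-nil if all of its elements are `p`-nilpotent. -/
def IsPNil (S : Set L) : Prop := ∀ x ∈ S, IsPNilpotent p F x

/-- A Lie ideal is restricted if it is closed under the `p`-mapping. -/
def IsRestrictedIdeal (I : LieIdeal F L) : Prop :=
  ∀ x ∈ I, pmap (p := p) (F := F) x ∈ I

/-- The restricted subalgebra generated by a set: the smallest Lie subalgebra containing
the set and closed under the `p`-mapping. -/
def restrictedSpan (s : Set L) : LieSubalgebra F L :=
  sInf {K : LieSubalgebra F L | s ⊆ K ∧ ∀ x ∈ K, pmap (p := p) (F := F) x ∈ K}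

end RestrictedLie

/-- `ι : L → A` exhibits the associative algebra `A` as the restricted enveloping algebra
`u(L)` of the restricted Lie algebra `L`: `ι` respects brackets and the `p`-mapping, and
is universal among such maps into associative `F`-algebras; moreover `ι` is injective
(by the PBW theorem). -/
structure IsRestrictedEnvelope (p : ℕ) (F : Type*) {L A : Type*} [Field F] [LieRing L]
    [LieAlgebra F L] [RestrictedLie p F L] [Ring A] [Algebra F A]
    (ι : L →ₗ[F] A) : Prop where
  map_lie : ∀ x y : L, ι ⁅x, y⁆ = ι x * ι y - ι y * ι x
  map_pmap : ∀ x : L, ι (RestrictedLie.pmap (p := p) (F := F) x) = (ι x) ^ p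
  injective : Function.Injective ι
  universal : ∀ (B : Type*) [Ring B] [Algebra F B] (f : L →ₗ[F] B),
    (∀ x y : L, f ⁅x, y⁆ = f x * f y - f y * f x) →
    (∀ x : L, f (RestrictedLie.pmap (p := p) (F := F) x) = (f x) ^ p) →
    ∃! g : A →ₐ[F] B, ∀ x : L, g (ι x) = f x

/-! For a restricted ideal `I` and `i ∈ I` we have `(y + i)^[p] ≡ y^[p] (mod I)`: the Jacobson
correction term is a sum of commutators from the Lie subalgebra `F y + I`, and all of these lie
in `I`. So if `n` iterations of the `p`-mapping kill `b ∈ J`, they send `a + b` (`a ∈ I`) into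
`I`, where `p`-nilpotency of `I` finishes the job. Membership in a directed supremum of ideals
is witnessed by a single ideal, which gives the statement about `O_p(L)`. -/

theorem LieSubmodule.exists_mem_of_mem_sSup_of_directedOn {R L M : Type*} [CommRing R]
    [LieRing L] [LieAlgebra R L] [AddCommGroup M] [Module R M] [LieRingModule L M]
    {S : Set (LieSubmodule R L M)} (hne : S.Nonempty) (hdir : DirectedOn (· ≤ ·) S) {x : M}
    (hx : x ∈ sSup S) : ∃ N ∈ S, x ∈ N := by
  obtain ⟨N, hN, hle⟩ := (CompleteLattice.isCompactElement_iff_le_of_directed_sSup_le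
    (α := LieSubmodule R L M) _).mp (isCompactElement_lieSpan_singleton R L x) S hne hdir
      (lieSpan_le.mpr (Set.singleton_subset_iff.mpr hx))
  exact ⟨N, hN, hle (subset_lieSpan rfl)⟩

namespace RestrictedLie

variable {p : ℕ} {F L : Type*} [Field F] [LieRing L] [LieAlgebra F L] [RestrictedLie p F L]

local notation "𝔭" => pmap (p := p) (F := F)

theorem pmap_zero : 𝔭 (0 : L) = 0 := by
  by_cases hp : p = 0
  · have h := ad_pmap (p := p) (F := F) (0 : L) (𝔭 0)
    have had : LieAlgebra.ad F L (0 : L) ^ p = 1 := by rw [hp, pow_zero]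
    rw [lie_self, had, Module.End.one_apply] at h
    exact h.symm
  · simpa [zero_pow hp] using pmap_smul (p := p) (F := F) (0 : F) (0 : L)

theorem isRestrictedIdeal_bot : IsRestrictedIdeal p F (⊥ : LieIdeal F L) := by
  rintro x (rfl : x = 0)
  simp [pmap_zero]

theorem isPNil_bot : IsPNil p F ((⊥ : LieIdeal F L) : Set L) := by
  rintro x (rfl : x = 0)
  exact ⟨0, rfl⟩

section

variable (I : LieIdeal F L)

theorem lie_mem_of_mem_span_singleton_sup {y u v : L} (hu : u ∈ (F ∙ y) ⊔ I.toSubmodule)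
    (hv : v ∈ (F ∙ y) ⊔ I.toSubmodule) : ⁅u, v⁆ ∈ I := by
  obtain ⟨_, hu₁, a, ha, rfl⟩ := Submodule.mem_sup.mp hu
  obtain ⟨_, hv₁, b, hb, rfl⟩ := Submodule.mem_sup.mp hv
  obtain ⟨α, rfl⟩ := Submodule.mem_span_singleton.mp hu₁
  obtain ⟨β, rfl⟩ := Submodule.mem_span_singleton.mp hv₁
  have hyy : ⁅α • y, β • y⁆ = 0 := by simp only [smul_lie, lie_smul, lie_self, smul_zero]
  rw [add_lie, lie_add (α • y), hyy, zero_add]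
  exact add_mem (lie_mem_right F L I _ _ hb) (lie_mem_left F L I _ _ ha)

theorem lie_mem_of_mem_lieSpan_pair {y i u v : L} (hi : i ∈ I)
    (hu : u ∈ LieSubalgebra.lieSpan F L {y, i}) (hv : v ∈ LieSubalgebra.lieSpan F L {y, i}) :
    ⁅u, v⁆ ∈ I := by
  let K : LieSubalgebra F L :=
    { (F ∙ y) ⊔ I.toSubmodule with
      lie_mem' := fun hu hv =>
        Submodule.mem_sup_right (lie_mem_of_mem_span_singleton_sup I hu hv) }
  have hK : LieSubalgebra.lieSpan F L {y, i} ≤ K := by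
    rw [LieSubalgebra.lieSpan_le, Set.insert_subset_iff, Set.singleton_subset_iff]
    exact ⟨Submodule.mem_sup_left (Submodule.mem_span_singleton_self y),
      Submodule.mem_sup_right hi⟩
  exact lie_mem_of_mem_span_singleton_sup I (hK hu) (hK hv)

variable {I}

theorem IsRestrictedIdeal.pmap_add_sub_pmap_mem (hI : IsRestrictedIdeal p F I) (y : L) {i : L}
    (hi : i ∈ I) : 𝔭 (y + i) - 𝔭 y ∈ I := by
  have hcorr : 𝔭 (y + i) - 𝔭 y - 𝔭 i ∈ I := by
    refine Submodule.span_le.mpr ?_ (pmap_add_sub_mem (p := p) (F := F) y i)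
    rintro _ ⟨u, hu, v, hv, rfl⟩
    exact lie_mem_of_mem_lieSpan_pair I hi hu hv
  simpa using add_mem hcorr (hI i hi)

theorem IsRestrictedIdeal.iterate_pmap_add_sub_iterate_pmap_mem (hI : IsRestrictedIdeal p F I)
    (n : ℕ) (y : L) {i : L} (hi : i ∈ I) : 𝔭^[n] (y + i) - 𝔭^[n] y ∈ I := by
  induction n with
  | zero => simpa using hi
  | succ n ih =>
    simp only [Function.iterate_succ_apply']
    simpa using hI.pmap_add_sub_pmap_mem (𝔭^[n] y) ih

variable {J : LieIdeal F L}

theorem IsRestrictedIdeal.sup (hI : IsRestrictedIdeal p F I) (hJ : IsRestrictedIdeal p F J) :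
    IsRestrictedIdeal p F (I ⊔ J) := by
  intro x hx
  obtain ⟨a, ha, b, hb, rfl⟩ := (LieSubmodule.mem_sup _ _ _).mp hx
  rw [← sub_add_cancel (𝔭 (a + b)) (𝔭 b), add_comm a b]
  exact add_mem (LieSubmodule.mem_sup_left (hI.pmap_add_sub_pmap_mem b ha))
    (LieSubmodule.mem_sup_right (hJ b hb))

theorem isPNil_sup (hI : IsRestrictedIdeal p F I) (hIn : IsPNil p F (I : Set L))
    (hJn : IsPNil p F (J : Set L)) : IsPNil p F ((I ⊔ J : LieIdeal F L) : Set L) := by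
  intro x hx
  obtain ⟨a, ha, b, hb, rfl⟩ := (LieSubmodule.mem_sup _ _ _).mp hx
  obtain ⟨n, hn⟩ := hJn b hb
  have hmem : 𝔭^[n] (a + b) ∈ I := by
    simpa [hn, add_comm b a] using hI.iterate_pmap_add_sub_iterate_pmap_mem n b ha
  obtain ⟨m, hm⟩ := hIn _ hmem
  exact ⟨m + n, by rwa [Function.iterate_add_apply]⟩

end

variable {S : Set (LieIdeal F L)}

theorem isRestrictedIdeal_sSup (hne : S.Nonempty) (hdir : DirectedOn (· ≤ ·) S)
    (hS : ∀ I ∈ S, IsRestrictedIdeal p F I) : IsRestrictedIdeal p F (sSup S) := by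
  intro x hx
  obtain ⟨I, hI, hxI⟩ := LieSubmodule.exists_mem_of_mem_sSup_of_directedOn hne hdir hx
  exact le_sSup hI (hS I hI x hxI)

theorem isPNil_sSup (hne : S.Nonempty) (hdir : DirectedOn (· ≤ ·) S)
    (hS : ∀ I ∈ S, IsPNil p F (I : Set L)) : IsPNil p F ((sSup S : LieIdeal F L) : Set L) := by
  intro x hx
  obtain ⟨I, hI, hxI⟩ := LieSubmodule.exists_mem_of_mem_sSup_of_directedOn hne hdir hx
  exact hS I hI x hxI

end RestrictedLie

open RestrictedLie in
theorem sup_pnil_restricted_ideals_and_Op_general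
    {p : ℕ} {F L : Type*} [Field F] [LieRing L] [LieAlgebra F L] [RestrictedLie p F L] :
    (∀ I J : LieIdeal F L,
      IsRestrictedIdeal p F I → IsRestrictedIdeal p F J →
      IsPNil p F (I : Set L) → IsPNil p F (J : Set L) →
        IsRestrictedIdeal p F (I ⊔ J) ∧ IsPNil p F ((I ⊔ J : LieIdeal F L) : Set L)) ∧
    (IsRestrictedIdeal p F
        (sSup {I : LieIdeal F L | IsRestrictedIdeal p F I ∧ IsPNil p F (I : Set L)}) ∧
      IsPNil p F
        ((sSup {I : LieIdeal F L | IsRestrictedIdeal p F I ∧ IsPNil p F (I : Set L)} :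
          LieIdeal F L) : Set L)) := by
  refine ⟨fun I J hI hJ hIn hJn => ⟨hI.sup hJ, isPNil_sup hI hIn hJn⟩, ?_⟩
  set S := {I : LieIdeal F L | IsRestrictedIdeal p F I ∧ IsPNil p F (I : Set L)}
  have hne : S.Nonempty := ⟨⊥, isRestrictedIdeal_bot, isPNil_bot⟩
  have hdir : DirectedOn (· ≤ ·) S := fun I hI J hJ =>
    ⟨I ⊔ J, ⟨hI.1.sup hJ.1, isPNil_sup hI.1 hI.2 hJ.2⟩, le_sup_left, le_sup_right⟩
  exact ⟨isRestrictedIdeal_sSup hne hdir fun _ hI => hI.1,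
    isPNil_sSup hne hdir fun _ hI => hI.2⟩

open RestrictedLie in
/-- The sum of two `p`-nil restricted ideals of a restricted Lie algebra is a `p`-nil
restricted ideal; consequently the sum `O_p(L)` of all `p`-nil restricted ideals is
itself a `p`-nil restricted ideal. -/
theorem sup_pnil_restricted_ideals_and_Op
    {p : ℕ} {F L : Type*} [Field F] [LieRing L] [LieAlgebra F L] [RestrictedLie p F L]
    (hp : p.Prime) [CharP F p] :
    (∀ I J : LieIdeal F L,
      IsRestrictedIdeal p F I → IsRestrictedIdeal p F J →
      IsPNil p F (I : Set L) → IsPNil p F (J : Set L) →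
        IsRestrictedIdeal p F (I ⊔ J) ∧ IsPNil p F ((I ⊔ J : LieIdeal F L) : Set L)) ∧
    (IsRestrictedIdeal p F
        (sSup {I : LieIdeal F L | IsRestrictedIdeal p F I ∧ IsPNil p F (I : Set L)}) ∧
      IsPNil p F
        ((sSup {I : LieIdeal F L | IsRestrictedIdeal p F I ∧ IsPNil p F (I : Set L)} :
          LieIdeal F L) : Set L)) :=
  sup_pnil_restricted_ideals_and_Op_general
end

section
/- Let L be a restricted Lie algebra over a field of characteristic p > 0 in which every element of the derived subalgebra is p-algebraic, and suppose every element of L is p-algebraic and dim [L, x] < ∞ for all x ∈ L (i.e., L = Δ(L)). Then L is locally finite-dimensional: every finitely generated restricted subalgebra of L is finite-dimensional. -/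
/-! Let `H = ⟨s⟩_p` for a finite set `s`. The elements `y` with `⁅y, L⁆ ⊆ ∑_{x ∈ s} [L, x]`
form a Lie subalgebra that is `p`-closed because `ad (y^[p]) = (ad y)^p`, so it contains `H`;
hence the span of `[H, H]` is finite-dimensional, spanned by a finite set `t ⊆ H`. Jacobson's
formula makes the `p`-map additive modulo `[H, H]`, so the sum of the finite-dimensional
restricted subalgebras `⟨x⟩_p`, `x ∈ s ∪ t`, is `p`-closed; it contains `[H, H]`, hence is a
restricted subalgebra containing `s`, and therefore contains `H`. -/

namespace LieSubalgebra

variable {R L : Type*} [CommRing R] [LieRing L] [LieAlgebra R L]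

def bracketSpan (H : LieSubalgebra R L) : Submodule R L :=
  Submodule.span R {z | ∃ u ∈ H, ∃ v ∈ H, z = ⁅u, v⁆}

lemma lie_mem_bracketSpan {H : LieSubalgebra R L} {u v : L} (hu : u ∈ H) (hv : v ∈ H) :
    ⁅u, v⁆ ∈ H.bracketSpan :=
  Submodule.subset_span ⟨u, hu, v, hv, rfl⟩

lemma bracketSpan_le_iff {H : LieSubalgebra R L} {V : Submodule R L} :
    H.bracketSpan ≤ V ↔ ∀ u ∈ H, ∀ v ∈ H, ⁅u, v⁆ ∈ V := by
  refine ⟨fun h u hu v hv => h (lie_mem_bracketSpan hu hv), fun h => Submodule.span_le.mpr ?_⟩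
  rintro _ ⟨u, hu, v, hv, rfl⟩
  exact h u hu v hv

lemma bracketSpan_le_toSubmodule (H : LieSubalgebra R L) : H.bracketSpan ≤ H.toSubmodule :=
  bracketSpan_le_iff.mpr fun _ hu _ hv => H.lie_mem hu hv

end LieSubalgebra

namespace RestrictedLie

variable {p : ℕ} {F L : Type*} [Field F] [LieRing L] [LieAlgebra F L] [RestrictedLie p F L]

lemma subset_restrictedSpan (s : Set L) : s ⊆ restrictedSpan p F s := by
  intro x hx
  rw [restrictedSpan, SetLike.mem_coe, ← LieSubalgebra.mem_toSubmodule,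
    LieSubalgebra.sInf_toSubmodule, Submodule.mem_sInf]
  rintro _ ⟨K, hK, rfl⟩
  exact hK.1 hx

lemma restrictedSpan_le {s : Set L} {K : LieSubalgebra F L} (hs : s ⊆ K)
    (hK : ∀ x ∈ K, pmap (p := p) (F := F) x ∈ K) : restrictedSpan p F s ≤ K :=
  sInf_le ⟨hs, hK⟩

lemma pmap_mem_restrictedSpan {s : Set L} {x : L} (hx : x ∈ restrictedSpan p F s) :
    pmap (p := p) (F := F) x ∈ restrictedSpan p F s := by
  rw [restrictedSpan, ← LieSubalgebra.mem_toSubmodule, LieSubalgebra.sInf_toSubmodule,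
    Submodule.mem_sInf] at hx ⊢
  rintro _ ⟨K, hK, rfl⟩
  exact hK.2 x (hx K ⟨K, hK, rfl⟩)

lemma restrictedSpan_le_restrictedSpan {s t : Set L} (h : s ⊆ restrictedSpan p F t) :
    restrictedSpan p F s ≤ restrictedSpan p F t :=
  restrictedSpan_le h fun _ => pmap_mem_restrictedSpan

lemma pmap_zero_s11 (hp : p ≠ 0) : pmap (p := p) (F := F) (0 : L) = 0 := by
  simpa [zero_pow hp] using pmap_smul (p := p) (F := F) (0 : F) (0 : L)

lemma lie_mem_of_mem_restrictedSpan (hp : p ≠ 0) {s : Set L} {R : Submodule F L}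
    (hs : ∀ x ∈ s, ∀ z, ⁅x, z⁆ ∈ R) {y : L} (hy : y ∈ restrictedSpan p F s) (z : L) :
    ⁅y, z⁆ ∈ R := by
  let K : LieSubalgebra F L :=
    { carrier := {y | ∀ z, ⁅y, z⁆ ∈ R}
      add_mem' := fun ha hb z => by rw [add_lie]; exact R.add_mem (ha z) (hb z)
      zero_mem' := fun z => by rw [zero_lie]; exact R.zero_mem
      smul_mem' := fun c a ha z => by rw [smul_lie]; exact R.smul_mem c (ha z)
      lie_mem' := fun ha hb z => by rw [lie_lie]; exact R.sub_mem (ha _) (hb _) }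
  refine restrictedSpan_le (K := K) hs (fun x hx z => ?_) hy z
  obtain ⟨q, rfl⟩ := Nat.exists_eq_succ_of_ne_zero hp
  rw [ad_pmap, pow_succ', Module.End.mul_apply]
  exact hx _

lemma pmap_add_sub_mem_bracketSpan {H : LieSubalgebra F L} {u v : L} (hu : u ∈ H)
    (hv : v ∈ H) :
    pmap (p := p) (F := F) (u + v) - pmap (p := p) (F := F) u - pmap (p := p) (F := F) v ∈
      H.bracketSpan := by
  have hspan : LieSubalgebra.lieSpan F L {u, v} ≤ H :=
    LieSubalgebra.lieSpan_le.mpr (Set.insert_subset_iff.mpr ⟨hu, Set.singleton_subset_iff.mpr hv⟩)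
  refine Submodule.span_mono ?_ (pmap_add_sub_mem u v)
  rintro _ ⟨a, ha, b, hb, rfl⟩
  exact ⟨a, hspan ha, b, hspan hb, rfl⟩

lemma pmap_mem_of_mem_span (hp : p ≠ 0) {H : LieSubalgebra F L} {V : Submodule F L}
    (hHV : H.bracketSpan ≤ V) {T : Set L} (hTH : T ⊆ H)
    (hTV : ∀ x ∈ T, pmap (p := p) (F := F) x ∈ V) {y : L} (hy : y ∈ Submodule.span F T) :
    pmap (p := p) (F := F) y ∈ V := by
  have hspanH : Submodule.span F T ≤ H.toSubmodule := Submodule.span_le.mpr hTH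
  induction hy using Submodule.span_induction with
  | mem x hx => exact hTV x hx
  | zero => rw [pmap_zero_s11 hp]; exact V.zero_mem
  | add a b ha hb iha ihb =>
    have hJ := hHV (pmap_add_sub_mem_bracketSpan (p := p) (hspanH ha) (hspanH hb))
    convert V.add_mem (V.add_mem hJ iha) ihb using 1
    abel
  | smul c a _ iha => rw [pmap_smul]; exact V.smul_mem _ iha

theorem finite_restrictedSpan_of_bracketSpan_le_span (hp : p ≠ 0) {s : Set L} {g : Finset L}
    (hsg : s ⊆ g) (hgH : (g : Set L) ⊆ restrictedSpan p F s)
    (hD : (restrictedSpan p F s).bracketSpan ≤ Submodule.span F g)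
    (halg : ∀ x ∈ g, Module.Finite F (restrictedSpan p F {x})) :
    Module.Finite F (restrictedSpan p F s) := by
  set H := restrictedSpan p F s
  let V : Submodule F L := ⨆ x : g, (restrictedSpan p F {(x : L)}).toSubmodule
  have hV : V = Submodule.span F (⋃ x : g, (restrictedSpan p F {(x : L)} : Set L)) :=
    Submodule.iSup_eq_span _
  have hgV : (g : Set L) ⊆ V := fun x hx =>
    Submodule.mem_iSup_of_mem (⟨x, hx⟩ : g) (subset_restrictedSpan {x} rfl)
  have hxH (x : g) : restrictedSpan p F {(x : L)} ≤ H :=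
    restrictedSpan_le_restrictedSpan (Set.singleton_subset_iff.mpr (hgH x.2))
  have hVH : V ≤ H.toSubmodule := iSup_le hxH
  have hDV : H.bracketSpan ≤ V := hD.trans (Submodule.span_le.mpr hgV)
  let K : LieSubalgebra F L :=
    { V with lie_mem' := fun ha hb => hDV (LieSubalgebra.lie_mem_bracketSpan (hVH ha) (hVH hb)) }
  have hHK : H ≤ K := by
    refine restrictedSpan_le (hsg.trans hgV) fun y hy => ?_
    refine pmap_mem_of_mem_span hp hDV (Set.iUnion_subset fun x => hxH x) (fun z hz => ?_)
      (hV ▸ hy)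
    obtain ⟨x, hz⟩ := Set.mem_iUnion.mp hz
    exact Submodule.mem_iSup_of_mem x (pmap_mem_restrictedSpan hz)
  have : ∀ x : g, Module.Finite F (restrictedSpan p F {(x : L)}).toSubmodule :=
    fun x => halg x x.2
  exact Submodule.finiteDimensional_of_le (S₂ := V)
    ((LieSubalgebra.toSubmodule_le_toSubmodule _ _).mpr hHK)

end RestrictedLie

open RestrictedLie in
theorem locally_finite_of_delta_p_algebraic_general
    {p : ℕ} {F L : Type*} [Field F] [LieRing L] [LieAlgebra F L] [RestrictedLie p F L]
    (hp : p.Prime)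
    (halg : ∀ x : L, Module.Finite F (restrictedSpan p F ({x} : Set L)))
    (hΔ : ∀ x : L, Module.Finite F (LinearMap.range (LieAlgebra.ad F L x))) :
    ∀ s : Finset L, Module.Finite F (restrictedSpan p F (s : Set L)) := by
  classical
  intro s
  set H := restrictedSpan p F (s : Set L)
  let R : Submodule F L := s.sup fun x => LinearMap.range (LieAlgebra.ad F L x)
  have : FiniteDimensional F R := Submodule.finiteDimensional_finset_sup _ _
  have hDR : H.bracketSpan ≤ R := LieSubalgebra.bracketSpan_le_iff.mpr fun u hu v _ =>
    lie_mem_of_mem_restrictedSpan hp.ne_zero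
      (fun x hx z => Finset.le_sup (f := fun x => LinearMap.range (LieAlgebra.ad F L x)) hx
        ⟨z, rfl⟩) hu v
  have : FiniteDimensional F H.bracketSpan := Submodule.finiteDimensional_of_le hDR
  obtain ⟨t, ht⟩ := (Submodule.fg_iff_finiteDimensional H.bracketSpan).mpr inferInstance
  have htH : (t : Set L) ⊆ H := fun x hx =>
    H.bracketSpan_le_toSubmodule (ht ▸ Submodule.subset_span hx)
  refine finite_restrictedSpan_of_bracketSpan_le_span hp.ne_zero (g := s ∪ t)
    (by simp) ?_ ?_ fun x _ => halg x
  · rw [Finset.coe_union]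
    exact Set.union_subset (subset_restrictedSpan _) htH
  · rw [← ht]
    exact Submodule.span_mono (by simp)

open RestrictedLie in
/-- Let `L` be a restricted Lie algebra over a field of characteristic `p > 0` in which
every element of the derived subalgebra is `p`-algebraic, every element of `L` is
`p`-algebraic, and `dim [L, x] < ∞` for every `x` (i.e. `L = Δ(L)`).  Then `L` is
locally finite-dimensional: every finitely generated restricted subalgebra is
finite-dimensional. -/
theorem locally_finite_of_delta_p_algebraic
    {p : ℕ} {F L : Type*} [Field F] [LieRing L] [LieAlgebra F L] [RestrictedLie p F L]
    (hp : p.Prime) [CharP F p]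
    (hder : ∀ x ∈ LieAlgebra.derivedSeries F L 1,
      Module.Finite F (restrictedSpan p F ({x} : Set L)))
    (halg : ∀ x : L, Module.Finite F (restrictedSpan p F ({x} : Set L)))
    (hΔ : ∀ x : L, Module.Finite F (LinearMap.range (LieAlgebra.ad F L x))) :
    ∀ s : Finset L, Module.Finite F (restrictedSpan p F (s : Set L)) :=
  locally_finite_of_delta_p_algebraic_general hp halg hΔ
end

section
/- Let L be the abelian restricted Lie algebra over K = F(t₁, t₂, …) (F a field of characteristic 2) with basis x, y₁, y₂, … and p-mapping determined by x^[2] = x and yᵢ^[2] = tᵢ x. Then L has no nonzero p-nilpotent elements; in particular O_p(L) = 0. -/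
/-- The field `K = F(t₁, t₂, …)` of rational functions in countably many indeterminates. -/
abbrev RatFunField (F : Type*) [Field F] := FractionRing (MvPolynomial ℕ F)

/-!
Since `L` is abelian, the Jacobson formula makes the `2`-mapping additive, hence
`2`-semilinear: `(αx + Σ βᵢyᵢ)^[2] = (α² + Σ βᵢ² tᵢ) x`. The coefficient vanishes only when all
`α, βᵢ` do, because `1, t₁, t₂, …` are linearly independent over the subfield of squares: after
clearing denominators, `∂/∂tᵢ` kills every square and so extracts `βᵢ²` from the relation.
Thus the `2`-mapping has trivial kernel, and no nonzero element is `2`-nilpotent.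
-/

namespace RestrictedLie

variable {p : ℕ} {F : Type*} {L : Type*} [Field F] [LieRing L] [LieAlgebra F L]
  [RestrictedLie p F L]

theorem pmap_add_of_abelian (h : ∀ a b : L, ⁅a, b⁆ = 0) (x y : L) :
    pmap (p := p) (F := F) (x + y) = pmap (p := p) (F := F) x + pmap (p := p) (F := F) y := by
  have hspan : Submodule.span F {z : L | ∃ u ∈ LieSubalgebra.lieSpan F L {x, y},
      ∃ v ∈ LieSubalgebra.lieSpan F L {x, y}, z = ⁅u, v⁆} = ⊥ :=
    Submodule.span_eq_bot.2 fun _ ⟨u, _, v, _, huv⟩ => huv ▸ h u v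
  have hmem := pmap_add_sub_mem (p := p) (F := F) x y
  rwa [hspan, Submodule.mem_bot, sub_sub, sub_eq_zero] at hmem

def pmapAddHom (h : ∀ a b : L, ⁅a, b⁆ = 0) : L →+ L :=
  AddMonoidHom.mk' (pmap (p := p) (F := F)) (pmap_add_of_abelian h)

theorem pmap_eq_sum_repr (h : ∀ a b : L, ⁅a, b⁆ = 0) {ι : Type*} (b : Module.Basis ι F L)
    (z : L) :
    pmap (p := p) (F := F) z = (b.repr z).sum fun j c => c ^ p • pmap (p := p) (F := F) (b j) := by
  conv_lhs => rw [← b.linearCombination_repr z, Finsupp.linearCombination_apply]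
  exact (map_finsuppSum (pmapAddHom (p := p) (F := F) h) _ _).trans
    (by simp [pmapAddHom, pmap_smul])

theorem eq_zero_of_isPNilpotent (h : ∀ z : L, pmap (p := p) (F := F) z = 0 → z = 0) {z : L}
    (hz : IsPNilpotent p F z) : z = 0 := by
  obtain ⟨n, hn⟩ := hz
  induction n generalizing z with
  | zero => exact hn
  | succ n ih => exact h z (ih hn)

theorem eq_bot_of_isPNil (h : ∀ z : L, IsPNilpotent p F z → z = 0) (I : LieIdeal F L)
    (hI : IsPNil p F (I : Set L)) : I = ⊥ :=
  (LieSubmodule.eq_bot_iff I).2 fun z hz => h z (hI z hz)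

end RestrictedLie

namespace MvPolynomial

variable {σ R : Type*} [CommRing R]

noncomputable def oneOrX (j : Option σ) : MvPolynomial σ R := j.elim 1 X

theorem pderiv_oneOrX [DecidableEq σ] (i : σ) (j : Option σ) :
    pderiv i (oneOrX j : MvPolynomial σ R) = if j = some i then 1 else 0 := by
  cases j with
  | none => simp [oneOrX]
  | some k => simp [oneOrX, pderiv_X, Pi.single_apply, eq_comm]

theorem pderiv_sq [CharP R 2] (i : σ) (f : MvPolynomial σ R) : pderiv i (f ^ 2) = 0 := by
  rw [sq, Derivation.leibniz]
  exact CharTwo.add_self_eq_zero _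

theorem eq_zero_of_sum_sq_mul_oneOrX_eq_zero [IsDomain R] [CharP R 2] {s : Finset (Option σ)}
    {a : Option σ → MvPolynomial σ R} (h : ∑ j ∈ s, a j ^ 2 * oneOrX j = 0) :
    ∀ j ∈ s, a j = 0 := by
  classical
  have hsome : ∀ i, some i ∈ s → a (some i) = 0 := by
    intro i hi
    have hi' := congrArg (pderiv i) h
    simp only [map_sum, Derivation.leibniz, pderiv_sq, pderiv_oneOrX, add_zero,
      smul_eq_mul, mul_ite, mul_one, mul_zero, Finset.sum_ite_eq', if_pos hi, map_zero] at hi'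
    exact pow_eq_zero_iff two_ne_zero |>.1 hi'
  rintro (_ | i) hj
  · rw [Finset.sum_eq_single_of_mem none hj] at h
    · simpa [oneOrX] using h
    · rintro (_ | k) hk hne
      · exact absurd rfl hne
      · simp [hsome k hk]
  · exact hsome i hj

end MvPolynomial

theorem IsFractionRing.eq_zero_of_sum_pow_mul_eq_zero {A K ι : Type*} [CommRing A] [Nontrivial A]
    [Field K] [Algebra A K] [IsFractionRing A K] (n : ℕ) (w : ι → A)
    (hw : ∀ (s : Finset ι) (a : ι → A), ∑ j ∈ s, a j ^ n * w j = 0 → ∀ j ∈ s, a j = 0)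
    {s : Finset ι} {β : ι → K} (h : ∑ j ∈ s, β j ^ n * algebraMap A K (w j) = 0) :
    ∀ j ∈ s, β j = 0 := by
  obtain ⟨b, hb⟩ := IsLocalization.exist_integer_multiples (nonZeroDivisors A) s β
  choose! a ha using hb
  have hb0 : algebraMap A K b ≠ 0 := IsFractionRing.to_map_ne_zero_of_mem_nonZeroDivisors b.2
  have ha0 : ∀ j ∈ s, a j = 0 := by
    refine hw s a (IsFractionRing.injective A K ?_)
    calc algebraMap A K (∑ j ∈ s, a j ^ n * w j)
        = algebraMap A K b ^ n * ∑ j ∈ s, β j ^ n * algebraMap A K (w j) := by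
          rw [map_sum, Finset.mul_sum]
          refine Finset.sum_congr rfl fun j hj => ?_
          rw [map_mul, map_pow, ha j hj, Algebra.smul_def, mul_pow, mul_assoc]
      _ = algebraMap A K 0 := by rw [h, mul_zero, map_zero]
  intro j hj
  have hbj := ha j hj
  rw [ha0 j hj, map_zero, Algebra.smul_def] at hbj
  exact (mul_eq_zero.1 hbj.symm).resolve_left hb0

open RestrictedLie in
/-- Let `L` be the abelian restricted Lie algebra over `K = F(t₁, t₂, …)` (`F` of
characteristic 2) with basis `x, y₁, y₂, …` and `p`-mapping determined by `x^[2] = x`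
and `yᵢ^[2] = tᵢ • x`.  Then `L` has no nonzero `p`-nilpotent elements; in particular
every `p`-nil restricted ideal is zero, i.e. `O_p(L) = 0`. -/
theorem no_pnilpotent_elements_example
    {F : Type*} [Field F] [CharP F 2] {L : Type*} [LieRing L]
    [LieAlgebra (RatFunField F) L] [RestrictedLie 2 (RatFunField F) L]
    (habelian : ∀ a b : L, ⁅a, b⁆ = 0)
    (bs : Module.Basis (Option ℕ) (RatFunField F) L)
    (hx : pmap (p := 2) (F := RatFunField F) (bs none) = bs none)
    (hy : ∀ i : ℕ, pmap (p := 2) (F := RatFunField F) (bs (some i)) =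
      algebraMap (MvPolynomial ℕ F) (RatFunField F) (MvPolynomial.X i) • bs none) :
    (∀ z : L, IsPNilpotent 2 (RatFunField F) z → z = 0) ∧
    ∀ I : LieIdeal (RatFunField F) L,
      IsRestrictedIdeal 2 (RatFunField F) I →
      IsPNil 2 (RatFunField F) (I : Set L) → I = ⊥ := by
  have hbasis : ∀ j, pmap (p := 2) (F := RatFunField F) (bs j) =
      algebraMap (MvPolynomial ℕ F) (RatFunField F) (MvPolynomial.oneOrX j) • bs none := by
    rintro (_ | i)
    · simpa [MvPolynomial.oneOrX] using hx
    · exact hy i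
  have hker : ∀ z : L, pmap (p := 2) (F := RatFunField F) z = 0 → z = 0 := by
    intro z hz
    rw [pmap_eq_sum_repr habelian bs, Finsupp.sum] at hz
    simp_rw [hbasis, smul_smul, ← Finset.sum_smul] at hz
    have hcoeff := IsFractionRing.eq_zero_of_sum_pow_mul_eq_zero 2 MvPolynomial.oneOrX
      (fun _ _ => MvPolynomial.eq_zero_of_sum_sq_mul_oneOrX_eq_zero)
      ((smul_eq_zero.1 hz).resolve_right (bs.ne_zero none))
    have hsupp : (bs.repr z).support = ∅ := Finset.eq_empty_of_forall_notMem
      fun j hj => Finsupp.mem_support_iff.1 hj (hcoeff j hj)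
    simpa using hsupp
  have hnil : ∀ z : L, IsPNilpotent 2 (RatFunField F) z → z = 0 :=
    fun _ => eq_zero_of_isPNilpotent hker
  exact ⟨hnil, fun I _ => eq_bot_of_isPNil hnil I⟩
end

section
/- A semiprime ring satisfying the descending chain condition on principal right ideals is semisimple Artinian. -/
/-!
Right ideals of `R` are the `Rᵐᵒᵖ`-submodules of `R`, and by Wedderburn–Artin it suffices to show
that `R` is a semisimple right module over itself, i.e. that `1` lies in the sum `S` of the minimal
right ideals. Semiprimeness makes every minimal right ideal of the form `fR` with `f` idempotent
(Brauer's lemma), and the descending chain condition makes every nonzero principal right ideal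
contain a minimal one. Pick an idempotent `e ∈ S` with `(1 - e)R` minimal. If `e ≠ 1`, a minimal
right ideal inside `(1 - e)R` yields an idempotent `f` orthogonal to `e` with `fR ⊆ S`; then
`e + f ∈ S` is idempotent and `(1 - e - f)R ⊊ (1 - e)R`, a contradiction.
-/

def principalRightIdeal {R : Type*} [Ring R] (a : R) : Set R := {x : R | ∃ r : R, x = a * r}

open Submodule MulOpposite

theorem IsAtom.span_singleton_eq {S M : Type*} [Semiring S] [AddCommMonoid M] [Module S M]
    {I : Submodule S M} (hI : IsAtom I) {x : M} (hx : x ∈ I) (hx0 : x ≠ 0) :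
    span S {x} = I :=
  (hI.le_iff.mp ((span_singleton_le_iff_mem x I).mpr hx)).resolve_left (by simpa using hx0)

section Ring

variable {R : Type*} [Ring R]

theorem mem_span_mulOpposite_singleton {a x : R} : x ∈ span Rᵐᵒᵖ {a} ↔ ∃ r, a * r = x := by
  simp [mem_span_singleton]

theorem principalRightIdeal_eq_span (a : R) : principalRightIdeal a = span Rᵐᵒᵖ {a} := by
  ext x
  simp [principalRightIdeal, mem_span_mulOpposite_singleton, eq_comm]

theorem eq_zero_of_forall_mul_mul_eq_zero
    (hsemiprime : ∀ I : TwoSidedIdeal R,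
      (∃ n : ℕ, ∀ f : Fin n → R, (∀ i, f i ∈ I) → (List.ofFn f).prod = 0) → I = ⊥)
    {a : R} (ha : ∀ s, a * s * a = 0) : a = 0 := by
  set I := TwoSidedIdeal.span {a}
  have h_left : ∀ x ∈ I, ∀ r, a * r * x = 0 := by
    intro x hx
    induction hx using TwoSidedIdeal.span_induction with
    | mem x hx => rw [Set.mem_singleton_iff.mp hx]; exact ha
    | zero => simp
    | add x y _ _ hx hy => simp [mul_add, hx, hy]
    | neg x _ hx => simp [hx]
    | left_absorb c x _ hx => intro r; simpa [mul_assoc] using hx (r * c)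
    | right_absorb c x _ hx => intro r; simp [← mul_assoc, hx]
  have h_sq : ∀ y ∈ I, ∀ x ∈ I, y * x = 0 := by
    intro y hy
    induction hy using TwoSidedIdeal.span_induction with
    | mem y hy => rw [Set.mem_singleton_iff.mp hy]; intro x hx; simpa using h_left x hx 1
    | zero => simp
    | add y z _ _ hy hz => intro x hx; simp [add_mul, hy x hx, hz x hx]
    | neg y _ hy => intro x hx; simp [hy x hx]
    | left_absorb c y _ hy => intro x hx; simp [mul_assoc, hy x hx]
    | right_absorb c y _ hy =>
      intro x hx; simpa [mul_assoc] using hy _ (I.mul_mem_left c x hx)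
  have hI : I = ⊥ :=
    hsemiprime I ⟨2, fun f hf => by simpa [List.ofFn_succ] using h_sq _ (hf 0) _ (hf 1)⟩
  have haI : a ∈ I := TwoSidedIdeal.subset_span rfl
  rwa [hI, TwoSidedIdeal.mem_bot] at haI

theorem wellFounded_span_singleton_lt
    (hdcc : ∀ f : ℕ → R,
      (∀ n : ℕ, principalRightIdeal (f (n + 1)) ⊆ principalRightIdeal (f n)) →
      ∃ N : ℕ, ∀ n ≥ N, principalRightIdeal (f n) = principalRightIdeal (f N)) :
    WellFounded fun b a : R => span Rᵐᵒᵖ {b} < span Rᵐᵒᵖ {a} := by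
  refine ⟨fun a => by_contra fun ha => ?_⟩
  obtain ⟨f, -, hf⟩ := not_acc_iff_exists_descending_chain.mp ha
  obtain ⟨N, hN⟩ := hdcc f fun n => by
    simpa only [principalRightIdeal_eq_span, SetLike.coe_subset_coe] using (hf n).le
  have hstable := hN (N + 1) N.le_succ
  simp only [principalRightIdeal_eq_span, SetLike.coe_set_eq] at hstable
  exact (hf N).ne hstable

theorem isAtomic_of_wellFounded_span_singleton_lt
    (hwf : WellFounded fun b a : R => span Rᵐᵒᵖ {b} < span Rᵐᵒᵖ {a}) :
    IsAtomic (Submodule Rᵐᵒᵖ R) := by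
  refine ⟨fun I => or_iff_not_imp_left.mpr fun hI => ?_⟩
  obtain ⟨a, ⟨haI, ha0⟩, hmin⟩ :=
    hwf.has_min {a | a ∈ I ∧ a ≠ 0} (exists_mem_ne_zero_of_ne_bot hI)
  have haI' : span Rᵐᵒᵖ {a} ≤ I := (span_singleton_le_iff_mem a I).mpr haI
  refine ⟨span Rᵐᵒᵖ {a}, ⟨by simpa using ha0, fun J hJ => by_contra fun hJ0 => ?_⟩, haI'⟩
  obtain ⟨b, hbJ, hb0⟩ := exists_mem_ne_zero_of_ne_bot hJ0
  have hba : span Rᵐᵒᵖ {b} < span Rᵐᵒᵖ {a} :=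
    ((span_singleton_le_iff_mem b J).mpr hbJ).trans_lt hJ
  exact hmin b ⟨(span_singleton_le_iff_mem b I).mp (hba.le.trans haI'), hb0⟩ hba

theorem exists_isIdempotentElem_eq_span_of_isAtom
    (hR : ∀ a : R, (∀ s, a * s * a = 0) → a = 0) {I : Submodule Rᵐᵒᵖ R} (hI : IsAtom I) :
    ∃ e, IsIdempotentElem e ∧ I = span Rᵐᵒᵖ {e} := by
  obtain ⟨a, haI, ha0⟩ := exists_mem_ne_zero_of_ne_bot hI.1
  obtain ⟨u, hau⟩ : ∃ u, a * u * a ≠ 0 := by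
    by_contra! h
    exact ha0 (hR a h)
  set x := a * u
  have hx0 : x ≠ 0 := left_ne_zero_of_mul hau
  have hxI : x ∈ I := I.smul_mem (op u) haI
  obtain ⟨y, hy⟩ := mem_span_mulOpposite_singleton.mp <|
    (hI.span_singleton_eq (show x * a ∈ I from I.smul_mem (op a) hxI) hau).symm ▸ hxI
  set e := a * y
  have heI : e ∈ I := I.smul_mem (op y) haI
  have hxe : x * e = x := by rw [← mul_assoc, hy]
  -- every nonzero `z ∈ I` generates `I ∋ e`, so `x * z = 0` would force `x = x * e = 0`
  have hann : ∀ z ∈ I, x * z = 0 → z = 0 := by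
    intro z hzI hxz
    by_contra hz0
    obtain ⟨r, hr⟩ := mem_span_mulOpposite_singleton.mp <|
      (hI.span_singleton_eq hzI hz0).symm ▸ heI
    exact hx0 (by rw [← hxe, ← hr, ← mul_assoc, hxz, zero_mul])
  have he : IsIdempotentElem e := sub_eq_zero.mp <|
    hann _ (I.sub_mem (I.smul_mem (op e) heI) heI)
      (by rw [mul_sub, ← mul_assoc, hxe, hxe, sub_self])
  refine ⟨e, he, (hI.span_singleton_eq heI fun he0 => hx0 ?_).symm⟩
  rw [← hxe, he0, mul_zero]

theorem exists_orthogonal_isIdempotentElem_isAtom_span [IsAtomic (Submodule Rᵐᵒᵖ R)]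
    (hR : ∀ a : R, (∀ s, a * s * a = 0) → a = 0) {e : R} (he : IsIdempotentElem e)
    (he1 : e ≠ 1) :
    ∃ f, IsIdempotentElem f ∧ e * f = 0 ∧ f * e = 0 ∧ IsAtom (span Rᵐᵒᵖ {f}) := by
  obtain ⟨I, hI, hIle⟩ := (eq_bot_or_exists_atom_le (span Rᵐᵒᵖ {1 - e})).resolve_left
    (by simpa [sub_eq_zero] using he1.symm)
  obtain ⟨g, hg, rfl⟩ := exists_isIdempotentElem_eq_span_of_isAtom hR hI
  have heg : e * g = 0 := by
    obtain ⟨r, rfl⟩ :=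
      mem_span_mulOpposite_singleton.mp ((span_singleton_le_iff_mem _ _).mp hIle)
    rw [← mul_assoc, he.mul_one_sub_self, zero_mul]
  have hge : (1 - e) * g = g := by rw [sub_mul, one_mul, heg, sub_zero]
  refine ⟨g * (1 - e), ?_, by rw [← mul_assoc, heg, zero_mul],
    by rw [mul_assoc, he.one_sub_mul_self, mul_zero], ?_⟩
  · show g * (1 - e) * (g * (1 - e)) = g * (1 - e)
    rw [mul_assoc, ← mul_assoc (1 - e), hge, ← mul_assoc, hg.eq]
  · convert hI using 1
    refine le_antisymm ((span_singleton_le_iff_mem _ _).mpr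
        (mem_span_mulOpposite_singleton.mpr ⟨1 - e, rfl⟩))
      ((span_singleton_le_iff_mem _ _).mpr (mem_span_mulOpposite_singleton.mpr ⟨g, ?_⟩))
    rw [mul_assoc, hge, hg.eq]

theorem span_singleton_one_sub_add_lt {e f : R} (hf : IsIdempotentElem f) (hef : e * f = 0)
    (hfe : f * e = 0) (hf0 : f ≠ 0) : span Rᵐᵒᵖ {1 - (e + f)} < span Rᵐᵒᵖ {1 - e} := by
  have hle : 1 - (e + f) ∈ span Rᵐᵒᵖ {1 - e} := mem_span_mulOpposite_singleton.mpr ⟨1 - f, by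
    calc (1 - e) * (1 - f) = 1 - (e + f) + e * f := by noncomm_ring
      _ = 1 - (e + f) := by rw [hef, add_zero]⟩
  refine SetLike.lt_iff_le_and_exists.mpr ⟨(span_singleton_le_iff_mem _ _).mpr hle, f,
    mem_span_mulOpposite_singleton.mpr ⟨f, by rw [sub_mul, one_mul, hef, sub_zero]⟩,
    fun hf' => hf0 ?_⟩
  obtain ⟨r, hr⟩ := mem_span_mulOpposite_singleton.mp hf'
  calc f = f * f := hf.eq.symm
    _ = f * ((1 - (e + f)) * r) := by rw [hr]
    _ = (f - f * e - f * f) * r := by noncomm_ring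
    _ = 0 := by rw [hfe, hf.eq]; noncomm_ring

theorem sSup_atoms_eq_top_of_semiprime_of_wellFounded
    (hR : ∀ a : R, (∀ s, a * s * a = 0) → a = 0)
    (hwf : WellFounded fun b a : R => span Rᵐᵒᵖ {b} < span Rᵐᵒᵖ {a}) :
    sSup {I : Submodule Rᵐᵒᵖ R | IsAtom I} = ⊤ := by
  have := isAtomic_of_wellFounded_span_singleton_lt hwf
  set S := sSup {I : Submodule Rᵐᵒᵖ R | IsAtom I}
  refine eq_top_iff.mpr fun x _ => ?_
  suffices h1 : (1 : R) ∈ S by simpa using S.smul_mem (op x) h1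
  obtain ⟨e, ⟨he, heS⟩, hmin⟩ := (InvImage.wf (fun e : R => 1 - e) hwf).has_min
    {e | IsIdempotentElem e ∧ e ∈ S} ⟨0, .zero, S.zero_mem⟩
  by_contra h1S
  obtain ⟨f, hf, hef, hfe, hfI⟩ :=
    exists_orthogonal_isIdempotentElem_isAtom_span hR he fun h => h1S (h ▸ heS)
  have hfS : span Rᵐᵒᵖ {f} ≤ S := le_sSup hfI
  exact hmin (e + f)
    ⟨he.add hf (by rw [hef, hfe, add_zero]), S.add_mem heS (hfS (mem_span_singleton_self f))⟩
    (span_singleton_one_sub_add_lt hf hef hfe fun h => hfI.1 (by simp [h]))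

theorem isSemisimpleRing_of_isSemisimpleModule_mulOpposite [IsSemisimpleModule Rᵐᵒᵖ R] :
    IsSemisimpleRing R :=
  isSemisimpleRing_mulOpposite_iff.mp (.congr (opLinearEquiv Rᵐᵒᵖ).symm)

end Ring

/-- A semiprime ring (no nonzero nilpotent two-sided ideals) satisfying the descending
chain condition on principal right ideals is semisimple Artinian. -/
theorem isSemisimpleRing_of_semiprime_dcc_principal_right
    {R : Type*} [Ring R]
    (hsemiprime : ∀ I : TwoSidedIdeal R,
      (∃ n : ℕ, ∀ f : Fin n → R, (∀ i, f i ∈ I) → (List.ofFn f).prod = 0) → I = ⊥)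
    (hdcc : ∀ f : ℕ → R,
      (∀ n : ℕ, principalRightIdeal (f (n + 1)) ⊆ principalRightIdeal (f n)) →
      ∃ N : ℕ, ∀ n ≥ N, principalRightIdeal (f n) = principalRightIdeal (f N)) :
    IsSemisimpleRing R := by
  have hS := sSup_atoms_eq_top_of_semiprime_of_wellFounded
    (fun _ => eq_zero_of_forall_mul_mul_eq_zero hsemiprime) (wellFounded_span_singleton_lt hdcc)
  have := (isSemisimpleModule_iff Rᵐᵒᵖ R).mpr (complementedLattice_of_sSup_atoms_eq_top hS)
  exact isSemisimpleRing_of_isSemisimpleModule_mulOpposite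
end
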